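/- arXiv:0712.3881 — 8 statements merged into one kernel-verified Lean document; each statement's English description precedes it below -/
import Mathlib

section
/- If n×n complex matrices A and B satisfy det(I - sA - tB) = det(I - sA)·det(I - tB) for all scalars s, t, then the algebraic multiplicity of 0 as an eigenvalue of A plus the algebraic multiplicity of 0 as an eigenvalue of B is at least n. -/
/-!
Putting `s = t` shows that the reversed characteristic polynomial `t ↦ det (1 - t • M)` of
`A + B` is the product of those of `A` and `B`. Its degree is `n - m_M(0)`, so comparing degrees gives
`(n - m_A(0)) + (n - m_B(0)) = n - m_{A+B}(0) ≤ n`.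
-/

open Matrix Polynomial

namespace Matrix

variable {n R : Type*} [Fintype n] [DecidableEq n] [CommRing R]

lemma eval_charpolyRev_eq_det (M : Matrix n n R) (t : R) :
    M.charpolyRev.eval t = (1 - t • M).det := by
  rw [charpolyRev, ← coe_evalRingHom, RingHom.map_det]
  congr 1
  ext i j
  simp only [RingHom.mapMatrix_apply, coe_evalRingHom, map_apply, sub_apply, one_apply,
    smul_apply, smul_eq_mul, eval_sub, eval_mul, eval_X, apply_ite (eval t), eval_one,
    eval_zero, eval_C]

section Nontrivial

variable [Nontrivial R]

lemma charpolyRev_ne_zero (M : Matrix n n R) : M.charpolyRev ≠ 0 := fun h => by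
  simpa [h] using M.eval_charpolyRev

lemma rootMultiplicity_zero_charpoly_le (M : Matrix n n R) :
    M.charpoly.rootMultiplicity 0 ≤ Fintype.card n := by
  rw [rootMultiplicity_eq_natTrailingDegree', ← M.charpoly_natDegree_eq_dim]
  exact natTrailingDegree_le_natDegree _

lemma natDegree_charpolyRev (M : Matrix n n R) :
    M.charpolyRev.natDegree = Fintype.card n - M.charpoly.rootMultiplicity 0 := by
  rw [← reverse_charpoly, reverse_natDegree, rootMultiplicity_eq_natTrailingDegree',
    charpoly_natDegree_eq_dim]

end Nontrivial

variable [IsDomain R]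

lemma card_le_rootMultiplicity_add_of_charpolyRev_add {A B : Matrix n n R}
    (h : (A + B).charpolyRev = A.charpolyRev * B.charpolyRev) :
    Fintype.card n ≤ A.charpoly.rootMultiplicity 0 + B.charpoly.rootMultiplicity 0 := by
  have hdeg := congrArg natDegree h
  rw [natDegree_mul A.charpolyRev_ne_zero B.charpolyRev_ne_zero, natDegree_charpolyRev,
    natDegree_charpolyRev, natDegree_charpolyRev] at hdeg
  have hA := A.rootMultiplicity_zero_charpoly_le
  have hB := B.rootMultiplicity_zero_charpoly_le
  omega

lemma charpolyRev_add_eq_mul_of_det [Infinite R] {A B : Matrix n n R}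
    (h : ∀ s : R, (1 - s • A - s • B).det = (1 - s • A).det * (1 - s • B).det) :
    (A + B).charpolyRev = A.charpolyRev * B.charpolyRev := by
  refine Polynomial.funext fun s => ?_
  rw [eval_mul, eval_charpolyRev_eq_det, eval_charpolyRev_eq_det, eval_charpolyRev_eq_det,
    smul_add, ← sub_sub]
  exact h s

end Matrix

theorem stmt1 (n : ℕ) (A B : Matrix (Fin n) (Fin n) ℂ)
    (hCS : ∀ s t : ℂ, (1 - s • A - t • B).det = (1 - s • A).det * (1 - t • B).det) :
    n ≤ A.charpoly.rootMultiplicity 0 + B.charpoly.rootMultiplicity 0 := by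
  have hmul : (A + B).charpolyRev = A.charpolyRev * B.charpolyRev :=
    charpolyRev_add_eq_mul_of_det fun s => hCS s s
  simpa using card_le_rootMultiplicity_add_of_charpolyRev_add hmul
end

section
/- If n×n complex matrices A and B satisfy det(I - sA - tB) = det(I - sA)·det(I - tB) for all scalars s, t, and A is invertible, then B is nilpotent. -/
/-!
Fix `t`. Both sides of `det (1 - s A - t B) = det (1 - s A) * det (1 - t B)` are polynomials in `s`
of degree at most `n`, and the coefficient of `s ^ n` is `det (-A)` on the left and
`det (-A) * det (1 - t B)` on the right. As `A` is invertible, `det (1 - t B) = 1` for every `t`,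
i.e. the reversed characteristic polynomial of `B` is `1`. Reversing back, `charpoly B = X ^ n`,
and Cayley–Hamilton gives `B ^ n = 0`.
-/

open Matrix Polynomial

variable {n : Type*} [Fintype n] [DecidableEq n]

section CommRing

variable {R : Type*} [CommRing R]

theorem Polynomial.eval_det_X_smul_add_C (A N : Matrix n n R) (s : R) :
    eval s (det ((X : R[X]) • A.map C + N.map C)) = det (s • A + N) := by
  rw [← coe_evalRingHom, RingHom.map_det]
  congr 1
  ext i j
  simp [mul_comm s]

theorem Matrix.eval_charpolyRev_eq_det_s2 (B : Matrix n n R) (t : R) :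
    eval t B.charpolyRev = det (1 - t • B) := by
  rw [charpolyRev, ← coe_evalRingHom, RingHom.map_det]
  congr 1
  ext i j
  simp [one_apply, apply_ite, mul_comm t]

theorem Matrix.charpoly_eq_X_pow_of_charpolyRev_eq_one [Nontrivial R] {B : Matrix n n R}
    (h : B.charpolyRev = 1) : B.charpoly = X ^ Fintype.card n := by
  rw [← reflect_reflect (N := Fintype.card n) (p := B.charpoly), ← charpoly_natDegree_eq_dim B,
    ← reverse, reverse_charpoly, h, reflect_one]

theorem Matrix.pow_card_eq_zero_of_charpolyRev_eq_one [Nontrivial R] {B : Matrix n n R}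
    (h : B.charpolyRev = 1) : B ^ Fintype.card n = 0 := by
  simpa [charpoly_eq_X_pow_of_charpolyRev_eq_one h] using aeval_self_charpoly B

end CommRing

section Field

variable {K : Type*} [Field K] [Infinite K]

theorem Matrix.charpolyRev_eq_one_of_det_one_sub_smul {B : Matrix n n K}
    (h : ∀ t : K, det (1 - t • B) = 1) : B.charpolyRev = 1 :=
  Polynomial.funext fun t => by rw [eval_charpolyRev_eq_det_s2, h, eval_one]

theorem Matrix.eq_one_of_det_smul_add_eq_mul {A M N : Matrix n n K} {c : K} (hA : A.det ≠ 0)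
    (h : ∀ s : K, det (s • A + N) = det (s • A + M) * c) : c = 1 := by
  have hpoly : det ((X : K[X]) • A.map C + N.map C) = det ((X : K[X]) • A.map C + M.map C) * C c :=
    Polynomial.funext fun s => by simp only [eval_mul, eval_C, eval_det_X_smul_add_C, h]
  have hcoeff := congrArg (coeff · (Fintype.card n)) hpoly
  simp only [coeff_mul_C, coeff_det_X_add_C_card] at hcoeff
  exact (mul_eq_left₀ hA).mp hcoeff.symm

end Field

theorem stmt2 (n : ℕ) (A B : Matrix (Fin n) (Fin n) ℂ)
    (hCS : ∀ s t : ℂ, (1 - s • A - t • B).det = (1 - s • A).det * (1 - t • B).det)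
    (hA : IsUnit A) :
    B ^ n = 0 := by
  have hdet : (-A).det ≠ 0 := ((isUnit_iff_isUnit_det _).mp hA.neg).ne_zero
  have hB : ∀ t : ℂ, (1 - t • B).det = 1 := fun t =>
    eq_one_of_det_smul_add_eq_mul (N := 1 - t • B) (M := 1) hdet fun s => by
      rw [smul_neg, neg_add_eq_sub, neg_add_eq_sub, sub_right_comm]
      exact hCS s t
  simpa using pow_card_eq_zero_of_charpolyRev_eq_one (charpolyRev_eq_one_of_det_one_sub_smul hB)
end

section
/- Let A and B be n×n complex matrices with AB = 0. Then det(I - sA - tB) = det(I - sA)·det(I - tB) for all scalars s, t. -/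
open Matrix

theorem one_sub_mul_one_sub_of_mul_eq_zero {R : Type*} [Ring R] {a b : R} (h : a * b = 0) :
    (1 - a) * (1 - b) = 1 - a - b := by
  rw [sub_mul, mul_sub, mul_sub, h, one_mul, mul_one, one_mul]
  abel

theorem Matrix.det_one_sub_sub_of_mul_eq_zero {n R : Type*} [Fintype n] [DecidableEq n]
    [CommRing R] {A B : Matrix n n R} (h : A * B = 0) :
    (1 - A - B).det = (1 - A).det * (1 - B).det := by
  rw [← det_mul, one_sub_mul_one_sub_of_mul_eq_zero h]

theorem stmt4 (n : ℕ) (A B : Matrix (Fin n) (Fin n) ℂ) (h : A * B = 0) :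
    ∀ s t : ℂ, (1 - s • A - t • B).det = (1 - s • A).det * (1 - t • B).det := by
  intro s t
  exact det_one_sub_sub_of_mul_eq_zero (by rw [smul_mul_smul_comm, h, smul_zero])
end

section
/- Let A and B be n×n complex matrices such that 0 is a semisimple eigenvalue of both A and B, B maps ker A into itself, and AB = 0. Then ℂⁿ = ker A + ker B. -/
/-!
Since `AB = 0`, the range of `B` lies in `ker A`. Semisimplicity of the eigenvalue `0` of `B`
(`ker B = ker B²`) makes `ker B` and `range B` complementary (Fitting's lemma in its simplest
case), so already `ker B + range B` is the whole space.
-/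

open Matrix

namespace LinearMap

theorem disjoint_ker_range_of_ker_eq_ker_mul_self {R M : Type*} [Semiring R] [AddCommMonoid M]
    [Module R M] {f : Module.End R M} (hf : ker f = ker (f * f)) : Disjoint (ker f) (range f) := by
  rw [Submodule.disjoint_def]
  rintro _ hx ⟨y, rfl⟩
  have hy : y ∈ ker (f * f) := hx
  rwa [← hf] at hy

theorem isCompl_ker_range_of_ker_eq_ker_mul_self {K V : Type*} [DivisionRing K] [AddCommGroup V]
    [Module K V] [FiniteDimensional K V] {f : Module.End K V} (hf : ker f = ker (f * f)) :
    IsCompl (ker f) (range f) :=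
  (Submodule.isCompl_iff_disjoint _ _ (by rw [add_comm, finrank_range_add_finrank_ker])).2
    (disjoint_ker_range_of_ker_eq_ker_mul_self hf)

theorem ker_sup_ker_eq_top_of_mul_eq_zero {K V : Type*} [DivisionRing K] [AddCommGroup V]
    [Module K V] [FiniteDimensional K V] {f g : Module.End K V} (hg : ker g = ker (g * g))
    (hfg : f * g = 0) : ker f ⊔ ker g = ⊤ := by
  have hrange : range g ≤ ker f := range_le_ker_iff.2 hfg
  refine top_unique ?_
  calc ⊤ = range g ⊔ ker g := (isCompl_ker_range_of_ker_eq_ker_mul_self hg).symm.sup_eq_top.symm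
    _ ≤ ker f ⊔ ker g := sup_le_sup_right hrange _

end LinearMap

theorem stmt6_general (n : ℕ) (A B : Matrix (Fin n) (Fin n) ℂ)
    (hB : LinearMap.ker B.mulVecLin = LinearMap.ker (B * B).mulVecLin)
    (hAB : A * B = 0) :
    LinearMap.ker A.mulVecLin ⊔ LinearMap.ker B.mulVecLin = ⊤ := by
  refine LinearMap.ker_sup_ker_eq_top_of_mul_eq_zero ?_ ?_
  · rwa [Module.End.mul_eq_comp, ← mulVecLin_mul]
  · rw [Module.End.mul_eq_comp, ← mulVecLin_mul, hAB, mulVecLin_zero]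

theorem stmt6 (n : ℕ) (A B : Matrix (Fin n) (Fin n) ℂ)
    (hA : LinearMap.ker A.mulVecLin = LinearMap.ker (A * A).mulVecLin)
    (hB : LinearMap.ker B.mulVecLin = LinearMap.ker (B * B).mulVecLin)
    (hinv : ∀ x : Fin n → ℂ, A.mulVec x = 0 → A.mulVec (B.mulVec x) = 0)
    (hAB : A * B = 0) :
    LinearMap.ker A.mulVecLin ⊔ LinearMap.ker B.mulVecLin = ⊤ :=
  stmt6_general n A B hB hAB
end

section
/- Let A and B be n×n complex matrices such that 0 is a semisimple eigenvalue of both A and B, B maps ker A into itself, and ℂⁿ = ker A + ker B. Then det(I - sA - tB) = det(I - sA)·det(I - tB) for all scalars s, t. -/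
/-!
Since `ker B` together with `ker A` spans `ℂⁿ` and `B` kills `ker B`, the range of `B` is
`B (ker A) ⊆ ker A`. Hence `A * B = 0`, so `1 - sA - tB = (1 - sA)(1 - tB)` and the
determinant is multiplicative.
-/

open Matrix

theorem LinearMap.range_eq_map_of_sup_ker_eq_top {R M N : Type*} [Semiring R]
    [AddCommMonoid M] [AddCommMonoid N] [Module R M] [Module R N]
    (f : M →ₗ[R] N) {K : Submodule R M} (h : K ⊔ LinearMap.ker f = ⊤) :
    LinearMap.range f = K.map f := by
  rw [← Submodule.map_top, ← h, Submodule.map_sup, LinearMap.le_ker_iff_map.mp le_rfl, sup_bot_eq]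

theorem one_sub_smul_mul_one_sub_smul {R A : Type*} [CommRing R] [Ring A] [Algebra R A]
    {a b : A} (hab : a * b = 0) (s t : R) :
    (1 - s • a) * (1 - t • b) = 1 - s • a - t • b := by
  rw [sub_mul, mul_sub, mul_sub, smul_mul_smul_comm, hab, smul_zero, one_mul, mul_one,
    one_mul, sub_zero, sub_sub, sub_sub, add_comm]

theorem Matrix.mul_eq_zero_of_range_le_ker {R n : Type*} [CommRing R] [Fintype n]
    [DecidableEq n] {A B : Matrix n n R}
    (h : LinearMap.range B.mulVecLin ≤ LinearMap.ker A.mulVecLin) : A * B = 0 := by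
  apply Matrix.toLin'.injective
  rw [Matrix.toLin'_mul, map_zero]
  exact LinearMap.range_le_ker_iff.mp h

theorem stmt7_general (n : ℕ) (A B : Matrix (Fin n) (Fin n) ℂ)
    (hinv : ∀ x : Fin n → ℂ, A.mulVec x = 0 → A.mulVec (B.mulVec x) = 0)
    (hsum : LinearMap.ker A.mulVecLin ⊔ LinearMap.ker B.mulVecLin = ⊤) :
    ∀ s t : ℂ, (1 - s • A - t • B).det = (1 - s • A).det * (1 - t • B).det := by
  intro s t
  have hAB : A * B = 0 := by
    apply Matrix.mul_eq_zero_of_range_le_ker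
    rw [B.mulVecLin.range_eq_map_of_sup_ker_eq_top hsum, Submodule.map_le_iff_le_comap]
    exact hinv
  rw [← det_mul, one_sub_smul_mul_one_sub_smul hAB]

theorem stmt7 (n : ℕ) (A B : Matrix (Fin n) (Fin n) ℂ)
    (hA : LinearMap.ker A.mulVecLin = LinearMap.ker (A * A).mulVecLin)
    (hB : LinearMap.ker B.mulVecLin = LinearMap.ker (B * B).mulVecLin)
    (hinv : ∀ x : Fin n → ℂ, A.mulVec x = 0 → A.mulVec (B.mulVec x) = 0)
    (hsum : LinearMap.ker A.mulVecLin ⊔ LinearMap.ker B.mulVecLin = ⊤) :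
    ∀ s t : ℂ, (1 - s • A - t • B).det = (1 - s • A).det * (1 - t • B).det :=
  stmt7_general n A B hinv hsum
end

section
/- Let A and B be n×n complex matrices such that 0 is a semisimple eigenvalue of A and B with ℂⁿ = ker A + ker B, and suppose that for every nonzero eigenvalue λ of A, the generalized eigenspace E_A(λ) ⊆ ker B. Then A and B satisfy det(I - sA - tB) = det(I - sA)·det(I - tB) for all s, t ∈ ℂ. -/
/-!
The hypotheses force `B * A = 0`, after which `1 - s • A - t • B = (1 - t • B) * (1 - s • A)`.
Indeed `ℂⁿ` is the sum of the generalized eigenspaces of `A`. Since `ker A = ker A²`, the one for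
the eigenvalue `0` is `ker A`, which `A` kills; every other one is `A`-invariant and lies in
`ker B`. Hence `range A ≤ ker B`.
-/

open Matrix

namespace Module.End

variable {K V : Type*} [Field K] [AddCommGroup V] [Module K V]

theorem maxGenEigenspace_zero_eq_ker_of_ker_eq_ker_sq {f : End K V}
    (hf : LinearMap.ker f = LinearMap.ker (f ^ 2)) :
    f.maxGenEigenspace 0 = LinearMap.ker f := by
  refine le_antisymm (fun x hx => ?_) (by simpa using f.eigenspace_le_maxGenEigenspace (μ := 0))
  obtain ⟨k, hk⟩ := (f.mem_maxGenEigenspace 0 x).mp hx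
  have hker : LinearMap.ker (f ^ 1) = LinearMap.ker (f ^ (1 + k)) :=
    ker_pow_constant (by simpa using hf) k
  have hxk : x ∈ LinearMap.ker (f ^ (1 + k)) := by
    have hk' : (f ^ k) x = 0 := by simpa using hk
    rw [LinearMap.mem_ker, pow_add, pow_one, mul_apply, hk', map_zero]
  simpa [← hker] using hxk

theorem range_le_of_maxGenEigenspace_le [IsAlgClosed K] [FiniteDimensional K V] {f : End K V}
    {W : Submodule K V} (hf : LinearMap.ker f = LinearMap.ker (f ^ 2))
    (hW : ∀ μ, μ ≠ 0 → f.HasEigenvalue μ → f.maxGenEigenspace μ ≤ W) :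
    LinearMap.range f ≤ W := by
  rw [LinearMap.range_eq_map, ← f.iSup_maxGenEigenspace_eq_top, Submodule.map_iSup]
  refine iSup_le fun μ => ?_
  rw [Submodule.map_le_iff_le_comap]
  rcases eq_or_ne μ 0 with rfl | hμ
  · rw [maxGenEigenspace_zero_eq_ker_of_ker_eq_ker_sq hf]
    intro x hx
    simp [LinearMap.mem_ker.mp hx]
  rcases eq_or_ne (f.maxGenEigenspace μ) ⊥ with hbot | hne
  · simp [hbot]
  have hμf : f.HasEigenvalue μ := (hasUnifEigenvalue_iff_hasUnifEigenvalue_one (by simp)).mp hne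
  exact fun x hx => hW μ hμ hμf (mapsTo_maxGenEigenspace_of_comm (Commute.refl f) μ hx)

end Module.End

namespace Matrix

variable {ι K : Type*} [Fintype ι] [DecidableEq ι] [Field K]

theorem maxGenEigenspace_mulVecLin (A : Matrix ι ι K) (μ : K) :
    Module.End.maxGenEigenspace A.mulVecLin μ =
      LinearMap.ker ((A - μ • 1) ^ Fintype.card ι).mulVecLin := by
  rw [Module.End.maxGenEigenspace_eq_genEigenspace_finrank, Module.finrank_fintype_fun_eq_card,
    Module.End.genEigenspace_nat, ← toLin'_apply', ← toLin'_apply']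
  congr 1
  change _ = toLinAlgEquiv' _
  rw [map_pow, map_sub, map_smul, map_one]
  rfl

theorem mul_eq_zero_iff_range_mulVecLin_le_ker {l m n R : Type*} [Fintype m] [Fintype n]
    [CommSemiring R]
    (B : Matrix l m R) (A : Matrix m n R) :
    B * A = 0 ↔ LinearMap.range A.mulVecLin ≤ LinearMap.ker B.mulVecLin := by
  classical
  rw [LinearMap.range_le_ker_iff, ← mulVecLin_mul, ← toLin'_apply', LinearEquiv.map_eq_zero_iff]

theorem det_one_sub_smul_sub_smul_of_mul_eq_zero {R : Type*} [CommRing R] {A B : Matrix ι ι R}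
    (hBA : B * A = 0) (s t : R) :
    (1 - s • A - t • B).det = (1 - s • A).det * (1 - t • B).det := by
  have hfactor : (1 - t • B) * (1 - s • A) = 1 - s • A - t • B := by
    rw [sub_mul, one_mul, mul_sub, mul_one, smul_mul_smul_comm, hBA, smul_zero, sub_zero]
  rw [← hfactor, det_mul, mul_comm]

end Matrix

theorem stmt9_general (n : ℕ) (A B : Matrix (Fin n) (Fin n) ℂ)
    (hA : LinearMap.ker A.mulVecLin = LinearMap.ker (A * A).mulVecLin)
    (hgen : ∀ lam : ℂ, lam ≠ 0 → lam ∈ spectrum ℂ A →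
      LinearMap.ker ((A - lam • 1) ^ n).mulVecLin ≤ LinearMap.ker B.mulVecLin) :
    ∀ s t : ℂ, (1 - s • A - t • B).det = (1 - s • A).det * (1 - t • B).det := by
  refine det_one_sub_smul_sub_smul_of_mul_eq_zero ?_
  rw [mul_eq_zero_iff_range_mulVecLin_le_ker]
  refine Module.End.range_le_of_maxGenEigenspace_le ?_ fun μ hμ hμ_eig => ?_
  · rwa [pow_two, Module.End.mul_eq_comp, ← mulVecLin_mul]
  · have hμ_spec : μ ∈ spectrum ℂ A := by
      simpa [← toLin'_apply'] using Module.End.hasEigenvalue_iff_mem_spectrum.mp hμ_eig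
    simpa [maxGenEigenspace_mulVecLin] using hgen μ hμ hμ_spec

theorem stmt9 (n : ℕ) (A B : Matrix (Fin n) (Fin n) ℂ)
    (hA : LinearMap.ker A.mulVecLin = LinearMap.ker (A * A).mulVecLin)
    (hB : LinearMap.ker B.mulVecLin = LinearMap.ker (B * B).mulVecLin)
    (hsum : LinearMap.ker A.mulVecLin ⊔ LinearMap.ker B.mulVecLin = ⊤)
    (hgen : ∀ lam : ℂ, lam ≠ 0 → lam ∈ spectrum ℂ A →
      LinearMap.ker ((A - lam • 1) ^ n).mulVecLin ≤ LinearMap.ker B.mulVecLin) :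
    ∀ s t : ℂ, (1 - s • A - t • B).det = (1 - s • A).det * (1 - t • B).det :=
  stmt9_general n A B hA hgen
end

section
/- Let A and B be n×n complex matrices such that B(ker A) ⊆ ker A, 0 is a semisimple eigenvalue of both A and B, ℂⁿ = ker A + ker B, and for each nonzero eigenvalue λ of A the generalized eigenspace E_A(λ) is contained in ker B. Then for each nonzero eigenvalue μ of B, the generalized eigenspace E_B(μ) is contained in ker A. -/
/-!
Write `x = u + v` with `A u = 0` and `B v = 0`. Since `ker A` is `B`-invariant, `(B - μ)ⁿ u` stays
in `ker A`, while `(B - μ)ⁿ v = (-μ)ⁿ v`. So if `(B - μ)ⁿ x = 0`, then `(-μ)ⁿ v ∈ ker A`, and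
`μ ≠ 0` forces `v ∈ ker A`, hence `x ∈ ker A`.
-/

open Matrix

namespace Module.End

variable {R M : Type*} [CommRing R] [AddCommGroup M] [Module R M]

lemma sub_smul_one_pow_mem_invtSubmodule {g : End R M} {p : Submodule R M}
    (hp : p ∈ g.invtSubmodule) (μ : R) (k : ℕ) : p ∈ ((g - μ • 1) ^ k).invtSubmodule := by
  have hstep : p ∈ (g - μ • 1).invtSubmodule := fun x hx ↦ by
    simpa using p.sub_mem (hp hx) (p.smul_mem μ hx)
  rw [mem_invtSubmodule_iff_mapsTo, coe_pow]
  exact Set.MapsTo.iterate hstep k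

lemma sub_smul_one_pow_apply_of_mem_ker {g : End R M} {v : M} (hv : v ∈ LinearMap.ker g)
    (μ : R) (k : ℕ) : ((g - μ • 1) ^ k) v = (-μ) ^ k • v := by
  induction k with
  | zero => simp
  | succ k ih =>
    rw [pow_succ', mul_apply, ih, map_smul, LinearMap.sub_apply, LinearMap.mem_ker.mp hv,
      LinearMap.smul_apply, one_apply, zero_sub, pow_succ']
    module

lemma ker_sub_smul_one_pow_le {g : End R M} {p : Submodule R M} (hp : p ∈ g.invtSubmodule)
    (hsup : p ⊔ LinearMap.ker g = ⊤) {μ : R} (hμ : IsUnit μ) (k : ℕ) :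
    LinearMap.ker ((g - μ • 1) ^ k) ≤ p := by
  intro x hx
  obtain ⟨u, hu, v, hv, rfl⟩ := Submodule.mem_sup.mp (hsup ▸ Submodule.mem_top : x ∈ p ⊔ _)
  have hvp : (-μ) ^ k • v ∈ p := by
    rw [LinearMap.mem_ker, map_add, sub_smul_one_pow_apply_of_mem_ker hv] at hx
    exact eq_neg_of_add_eq_zero_right hx ▸
      p.neg_mem (sub_smul_one_pow_mem_invtSubmodule hp μ k hu)
  exact p.add_mem hu ((p.smul_mem_iff_of_isUnit (hμ.neg.pow k)).mp hvp)

end Module.End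

theorem stmt15_general (n : ℕ) (A B : Matrix (Fin n) (Fin n) ℂ)
    (hinv : ∀ x : Fin n → ℂ, A.mulVec x = 0 → A.mulVec (B.mulVec x) = 0)
    (hsum : LinearMap.ker A.mulVecLin ⊔ LinearMap.ker B.mulVecLin = ⊤) :
    ∀ mu : ℂ, mu ≠ 0 → mu ∈ spectrum ℂ B →
      LinearMap.ker ((B - mu • 1) ^ n).mulVecLin ≤ LinearMap.ker A.mulVecLin := by
  intro mu hmu _
  have hlin : ((B - mu • 1) ^ n).mulVecLin = (B.mulVecLin - mu • 1) ^ n := by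
    simp only [← toLin'_apply', toLin'_pow, map_sub, map_smul, toLin'_one, ← Module.End.one_eq_id]
  rw [hlin]
  refine Module.End.ker_sub_smul_one_pow_le ?_ hsum (Ne.isUnit hmu) n
  exact fun x hx ↦ hinv x hx

theorem stmt15 (n : ℕ) (A B : Matrix (Fin n) (Fin n) ℂ)
    (hinv : ∀ x : Fin n → ℂ, A.mulVec x = 0 → A.mulVec (B.mulVec x) = 0)
    (hA : LinearMap.ker A.mulVecLin = LinearMap.ker (A * A).mulVecLin)
    (hB : LinearMap.ker B.mulVecLin = LinearMap.ker (B * B).mulVecLin)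
    (hsum : LinearMap.ker A.mulVecLin ⊔ LinearMap.ker B.mulVecLin = ⊤)
    (hgen : ∀ lam : ℂ, lam ≠ 0 → lam ∈ spectrum ℂ A →
      LinearMap.ker ((A - lam • 1) ^ n).mulVecLin ≤ LinearMap.ker B.mulVecLin) :
    ∀ mu : ℂ, mu ≠ 0 → mu ∈ spectrum ℂ B →
      LinearMap.ker ((B - mu • 1) ^ n).mulVecLin ≤ LinearMap.ker A.mulVecLin :=
  stmt15_general n A B hinv hsum
end

section
/- Let A and B be n×n normal complex matrices. Then det(I - sA - tB) = det(I - sA)·det(I - tB) for all s, t ∈ ℂ if and only if AB = 0. -/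
/-!
By Schur triangulation, for every complex matrix `X` the sum of `|λ|²` over its eigenvalues is at
most `tr (X Xᴴ)`, with equality exactly when `X` is normal.

The factorization of `det (1 - s A - t B)` says that the eigenvalues of `u A + v B`, together with
`n` zeros, are those of `u A` together with those of `v B`. For normal `A` and `B` this gives
`tr ((u A + v B) (u A + v B)ᴴ) ≥ |u|² tr (A Aᴴ) + |v|² tr (B Bᴴ)` for all `u, v`, which
forces `tr (A Bᴴ) = 0`. Then equality holds, so every `u A + v B` is normal, and hence
`A Bᴴ = Bᴴ A`. Comparing the sums of `|λ|⁴` for `(A + v B)²`, with `v` running over the fourth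
roots of unity, gives `A B + B A = 0`. Finally `A B = -B A` and `A Bᴴ = Bᴴ A` give
`tr (A B (A B)ᴴ) = -tr (Bᴴ A (Bᴴ A)ᴴ)`, so both vanish and `A B = 0`.
-/

open Module Matrix Polynomial Complex ComplexOrder

theorem LinearMap.exists_orthonormalBasis_inner_apply_eq_zero_of_lt
    {E : Type*} [NormedAddCommGroup E] [InnerProductSpace ℂ E] [FiniteDimensional ℂ E]
    (f : E →ₗ[ℂ] E) {n : ℕ} (hn : finrank ℂ E = n) :
    ∃ b : OrthonormalBasis (Fin n) ℂ E, ∀ i j, j < i → inner ℂ (b i) (f (b j)) = 0 := by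
  induction n generalizing E with
  | zero => exact ⟨(stdOrthonormalBasis ℂ E).reindex (finCongr hn), fun i => i.elim0⟩
  | succ n ih =>
    have : Nontrivial E := Module.nontrivial_of_finrank_eq_succ hn
    have : Fact (finrank ℂ E = n + 1) := ⟨hn⟩
    obtain ⟨μ, hμ⟩ := Module.End.exists_eigenvalue (LinearMap.adjoint f)
    obtain ⟨v, hv⟩ := hμ.exists_hasEigenvector
    -- the orthogonal complement of an eigenvector of the adjoint is `f`-invariant
    have hW : ∀ x ∈ (ℂ ∙ v)ᗮ, f x ∈ (ℂ ∙ v)ᗮ := by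
      intro x hx
      rw [Submodule.mem_orthogonal_singleton_iff_inner_right] at hx ⊢
      rw [← LinearMap.adjoint_inner_left, hv.apply_eq_smul, inner_smul_left, hx, mul_zero]
    obtain ⟨b', hb'⟩ := ih (f.restrict hW) (Submodule.finrank_orthogonal_span_singleton hv.2)
    let w : E := ((‖v‖ : ℂ)⁻¹) • v
    have hw : ‖w‖ = 1 := by
      have := norm_ne_zero_iff.mpr hv.2
      simp [w, norm_smul, this]
    have hwW : ∀ i, inner ℂ w (b' i : E) = 0 := fun i => by
      simp [w, Submodule.mem_orthogonal_singleton_iff_inner_right.mp (b' i).2]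
    let e : Fin (n + 1) → E := Fin.snoc (fun i => (b' i : E)) w
    have he : Orthonormal ℂ e := by
      rw [orthonormal_iff_ite]
      intro i j
      induction i using Fin.lastCases <;> induction j using Fin.lastCases <;>
        simp [e, hw, hwW, inner_eq_zero_symm.mp (hwW _), ← Submodule.coe_inner,
          orthonormal_iff_ite.mp b'.orthonormal, Fin.castSucc_inj, Fin.castSucc_ne_last,
          (Fin.castSucc_ne_last _).symm]
    let b : OrthonormalBasis (Fin (n + 1)) ℂ E :=
      (basisOfOrthonormalOfCardEqFinrank he (by simp [hn])).toOrthonormalBasis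
        (by simpa using he)
    have hb : ⇑b = e := by simp [b]
    refine ⟨b, fun i j hij => ?_⟩
    rw [hb]
    induction j using Fin.lastCases with
    | last => exact absurd hij (not_lt.mpr (Fin.le_last i))
    | cast j =>
      induction i using Fin.lastCases with
      | last =>
        simp [e, w,
          Submodule.mem_orthogonal_singleton_iff_inner_right.mp (hW _ (b' j).2)]
      | cast i =>
        simpa [e, Submodule.coe_inner] using hb' i j (Fin.castSucc_lt_castSucc_iff.mp hij)

namespace Matrix

variable {ι : Type*} [Fintype ι]

lemma trace_mul_star_eq_sum (T : Matrix ι ι ℂ) :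
    (T * star T).trace = ∑ i, ∑ j, T i j * star (T i j) := by
  simp [trace, mul_apply]

lemma trace_mul_star_nonneg (X : Matrix ι ι ℂ) : 0 ≤ (X * star X).trace :=
  (posSemidef_self_mul_conjTranspose X).trace_nonneg

lemma diag_mul_star_le_sum (T : Matrix ι ι ℂ) (i : ι) :
    T i i * star (T i i) ≤ ∑ j, T i j * star (T i j) :=
  Finset.single_le_sum (f := fun j => T i j * star (T i j)) (fun _ _ => mul_star_self_nonneg _)
    (Finset.mem_univ i)

lemma sum_diag_mul_star_le_trace (T : Matrix ι ι ℂ) :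
    ∑ i, T i i * star (T i i) ≤ (T * star T).trace := by
  rw [trace_mul_star_eq_sum]
  exact Finset.sum_le_sum fun i _ => T.diag_mul_star_le_sum i

lemma trace_smul_add_smul_mul_star (A B : Matrix ι ι ℂ) (u v : ℂ) :
    ((u • A + v • B) * star (u • A + v • B)).trace =
      (u • A * star (u • A)).trace + (v • B * star (v • B)).trace +
        (u * star v * (A * star B).trace + star (u * star v * (A * star B).trace)) := by
  have : (B * star A).trace = star (A * star B).trace := by
    simp only [star_eq_conjTranspose]
    rw [← trace_conjTranspose, conjTranspose_mul, conjTranspose_conjTranspose]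
  simp only [star_add, star_smul, add_mul, mul_add, smul_mul_assoc, mul_smul_comm, trace_add,
    trace_smul, smul_eq_mul, this, star_mul', star_star]
  ring

/-- Averaging over the fourth roots of unity `v` kills the cross terms of `P + v Q + v² R`. -/
lemma trace_mul_star_add_smul_add_smul_fourth_roots (P Q R : Matrix ι ι ℂ) :
    ((P + Q + R) * star (P + Q + R)).trace + ((P - Q + R) * star (P - Q + R)).trace +
      ((P + I • Q - R) * star (P + I • Q - R)).trace +
      ((P - I • Q - R) * star (P - I • Q - R)).trace =
    4 * ((P * star P).trace + (Q * star Q).trace + (R * star R).trace) := by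
  simp only [star_add, star_sub, star_smul, add_mul, mul_add, sub_mul, mul_sub, smul_mul_assoc,
    mul_smul_comm, trace_add, trace_sub, trace_smul, smul_eq_mul, Complex.star_def, conj_I]
  linear_combination (-2 * (Q * star Q).trace) * I_mul_I

lemma mul_star_comm_of_isStarNormal_add {A B : Matrix ι ι ℂ} [hA : IsStarNormal A]
    [hB : IsStarNormal B] (h₁ : IsStarNormal (A + B)) (h₂ : IsStarNormal (A + I • B)) :
    A * star B = star B * A := by
  have e₁ := h₁.star_comm_self.eq
  -- multiplied by `I` so that `I * I` does not turn up in the coefficients below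
  have e₂ := congrArg (I • ·) h₂.star_comm_self.eq
  simp only [star_add, star_smul, add_mul, mul_add, smul_mul_assoc, mul_smul_comm, smul_add,
    Complex.star_def, conj_I, neg_smul, smul_neg, smul_smul, neg_mul, mul_neg, I_mul_I, neg_neg,
    one_smul] at e₁ e₂
  linear_combination (norm := module) (-1 / 2 : ℂ) • e₁ - (1 / 2 : ℂ) • e₂ +
    ((1 + I) / 2) • hA.star_comm_self.eq + ((1 + I) / 2) • hB.star_comm_self.eq

lemma mul_eq_zero_of_anticommute {A B : Matrix ι ι ℂ} (h₁ : A * B = -(B * A))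
    (h₂ : A * star B = star B * A) : A * B = 0 := by
  have h : (A * B * star (A * B)).trace = -(star B * A * star (star B * A)).trace :=
    calc (A * B * star (A * B)).trace = -(B * (A * star B) * star A).trace := by
          rw [star_mul, h₁, neg_mul, trace_neg]; simp only [mul_assoc]
      _ = -(B * (star B * A * star A)).trace := by rw [h₂, mul_assoc]
      _ = -(star B * A * star (star B * A)).trace := by
          rw [trace_mul_comm, star_mul, star_star]; simp only [mul_assoc]
  have h0 := ((add_eq_zero_iff_of_nonneg (trace_mul_star_nonneg _) (trace_mul_star_nonneg _)).mp
    (add_eq_zero_iff_eq_neg.mpr h)).1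
  rwa [star_eq_conjTranspose, trace_mul_conjTranspose_self_eq_zero_iff] at h0

variable [DecidableEq ι]

theorem exists_unitary_isUpperTriangular [LinearOrder ι] (M : Matrix ι ι ℂ) :
    ∃ U : unitary (Matrix ι ι ℂ), ∃ T : Matrix ι ι ℂ,
      T.IsUpperTriangular ∧ Unitary.conjStarAlgAut ℂ _ U T = M := by
  obtain ⟨b, hb⟩ := (toEuclideanLin M).exists_orthonormalBasis_inner_apply_eq_zero_of_lt
    finrank_euclideanSpace
  let e := Fintype.orderIsoFinOfCardEq ι rfl
  let c := b.reindex e.toEquiv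
  let U : unitary (Matrix ι ι ℂ) :=
    ⟨(EuclideanSpace.basisFun ι ℂ).toBasis.toMatrix c.toBasis,
      (EuclideanSpace.basisFun ι ℂ).toMatrix_orthonormalBasis_mem_unitary c⟩
  refine ⟨U, star (U : Matrix ι ι ℂ) * M * U, fun i j hij => ?_, ?_⟩
  · -- the `(i, j)` entry of `Uᴴ M U` is `⟪c i, M (c j)⟫`
    have hc : ∀ k, b (e.symm k) = c k := fun k => (b.reindex_apply e.toEquiv k).symm
    have := hb (e.symm i) (e.symm j) (e.symm.lt_iff_lt.mpr hij)
    rw [hc, hc] at this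
    simp only [toLpLin_apply, PiLp.inner_apply, RCLike.inner_apply, mulVec, dotProduct] at this
    simp only [U, mul_apply, Finset.sum_mul, Basis.toMatrix_apply, star_apply,
      EuclideanSpace.basisFun_toBasis, PiLp.basisFun_repr, OrthonormalBasis.coe_toBasis]
    rw [Finset.sum_comm, ← this]
    refine Finset.sum_congr rfl fun k _ => ?_
    rw [Finset.sum_mul]
    refine Finset.sum_congr rfl fun l _ => ?_
    simp only [RCLike.star_def]
    ring
  · simp [← mul_assoc, mul_assoc _ _ (star (U : Matrix ι ι ℂ))]

lemma eq_zero_of_sum_mul_star_eq (T : Matrix ι ι ℂ) {i : ι}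
    (h : ∑ j, T i j * star (T i j) = T i i * star (T i i)) {j : ι} (hj : j ≠ i) :
    T i j = 0 := by
  rw [← Finset.add_sum_erase _ _ (Finset.mem_univ i), add_eq_left,
    Finset.sum_eq_zero_iff_of_nonneg fun _ _ => mul_star_self_nonneg _] at h
  exact (CStarRing.mul_star_self_eq_zero_iff _).mp
    (h j (Finset.mem_erase.mpr ⟨hj, Finset.mem_univ j⟩))

lemma isDiag_of_sum_diag_mul_star_eq_trace {T : Matrix ι ι ℂ}
    (h : ∑ i, T i i * star (T i i) = (T * star T).trace) : T.IsDiag := by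
  rw [trace_mul_star_eq_sum, Finset.sum_eq_sum_iff_of_le fun i _ => T.diag_mul_star_le_sum i] at h
  exact fun i j hij => T.eq_zero_of_sum_mul_star_eq (h i (Finset.mem_univ i)).symm hij.symm

lemma IsUpperTriangular.isDiag_of_isStarNormal [LinearOrder ι] {T : Matrix ι ι ℂ}
    (hT : T.IsUpperTriangular) [hN : IsStarNormal T] : T.IsDiag := by
  suffices ∀ i, ∀ j ≠ i, T i j = 0 from fun i j hij => this i j hij.symm
  intro i
  induction i using WellFoundedLT.induction with
  | _ i ih =>
    refine fun j => T.eq_zero_of_sum_mul_star_eq ?_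
    -- the `i`-th column vanishes off the diagonal: above it by induction, below it since `T` is
    -- upper triangular; so normality at `(i, i)` says the `i`-th row does too
    have hcol : ∀ k ≠ i, T k i = 0 := fun k hk =>
      hk.lt_or_gt.elim (fun h => ih k h i hk.symm) (fun h => hT h)
    have := congrFun (congrFun hN.star_comm_self.eq i) i
    simp only [mul_apply, star_apply] at this
    rw [← this, Finset.sum_eq_single i (fun k _ hk => by simp [hcol k hk]) (by simp), mul_comm]

lemma charpoly_conjStarAlgAut (U : unitary (Matrix ι ι ℂ)) (X : Matrix ι ι ℂ) :
    (Unitary.conjStarAlgAut ℂ _ U X).charpoly = X.charpoly := by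
  rw [Unitary.conjStarAlgAut_apply, charpoly_mul_comm, ← mul_assoc, Unitary.coe_star_mul_self,
    one_mul]

lemma trace_conjStarAlgAut (U : unitary (Matrix ι ι ℂ)) (X : Matrix ι ι ℂ) :
    (Unitary.conjStarAlgAut ℂ _ U X).trace = X.trace := by
  rw [Unitary.conjStarAlgAut_apply, trace_mul_cycle, Unitary.coe_star_mul_self, one_mul]

lemma trace_conjStarAlgAut_mul_star (U : unitary (Matrix ι ι ℂ)) (X : Matrix ι ι ℂ) :
    (Unitary.conjStarAlgAut ℂ _ U X * star (Unitary.conjStarAlgAut ℂ _ U X)).trace =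
      (X * star X).trace := by
  rw [← map_star, ← map_mul, trace_conjStarAlgAut]

lemma roots_charpoly_of_isUpperTriangular [LinearOrder ι] {T : Matrix ι ι ℂ}
    (hT : T.IsUpperTriangular) : T.charpoly.roots = Finset.univ.val.map T.diag := by
  rw [charpoly_of_isUpperTriangular T hT,
    ← roots_multiset_prod_X_sub_C (Finset.univ.val.map T.diag), Multiset.map_map]
  rfl

noncomputable def sumRootsNormSqPow (k : ℕ) (X : Matrix ι ι ℂ) : ℂ :=
  (X.charpoly.roots.map fun z => (z * star z) ^ k).sum

lemma sumRootsNormSqPow_of_isUpperTriangular [LinearOrder ι] {T : Matrix ι ι ℂ}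
    (hT : T.IsUpperTriangular) (k : ℕ) :
    sumRootsNormSqPow k T = ∑ i, (T i i * star (T i i)) ^ k := by
  rw [sumRootsNormSqPow, roots_charpoly_of_isUpperTriangular hT, Multiset.map_map]
  rfl

lemma sumRootsNormSqPow_conjStarAlgAut (k : ℕ) (U : unitary (Matrix ι ι ℂ))
    (X : Matrix ι ι ℂ) :
    sumRootsNormSqPow k (Unitary.conjStarAlgAut ℂ _ U X) = sumRootsNormSqPow k X := by
  rw [sumRootsNormSqPow, charpoly_conjStarAlgAut, sumRootsNormSqPow]

theorem sumRootsNormSqPow_one_le_trace (X : Matrix ι ι ℂ) :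
    sumRootsNormSqPow 1 X ≤ (X * star X).trace := by
  let := LinearOrder.lift' _ (Fintype.equivFin ι).injective
  obtain ⟨U, T, hT, rfl⟩ := exists_unitary_isUpperTriangular X
  rw [sumRootsNormSqPow_conjStarAlgAut, sumRootsNormSqPow_of_isUpperTriangular hT,
    trace_conjStarAlgAut_mul_star]
  simpa using T.sum_diag_mul_star_le_trace

theorem isStarNormal_of_sumRootsNormSqPow_one_eq {X : Matrix ι ι ℂ}
    (h : sumRootsNormSqPow 1 X = (X * star X).trace) : IsStarNormal X := by
  let := LinearOrder.lift' _ (Fintype.equivFin ι).injective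
  obtain ⟨U, T, hT, rfl⟩ := exists_unitary_isUpperTriangular X
  rw [sumRootsNormSqPow_conjStarAlgAut, sumRootsNormSqPow_of_isUpperTriangular hT,
    trace_conjStarAlgAut_mul_star] at h
  have : IsStarNormal T := by
    rw [← (isDiag_of_sum_diag_mul_star_eq_trace (T := T) (by simpa using h)).diagonal_diag]
    exact ⟨by simpa [star_eq_conjTranspose] using commute_diagonal _ _⟩
  infer_instance

theorem sumRootsNormSqPow_eq_trace (X : Matrix ι ι ℂ) [IsStarNormal X] (k : ℕ) :
    sumRootsNormSqPow k X = (X ^ k * star (X ^ k)).trace := by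
  let := LinearOrder.lift' _ (Fintype.equivFin ι).injective
  obtain ⟨U, T, hT, rfl⟩ := exists_unitary_isUpperTriangular X
  have : IsStarNormal T := by
    simpa only [StarAlgEquiv.symm_apply_apply] using
      IsStarNormal.map (Unitary.conjStarAlgAut ℂ _ U).symm (Unitary.conjStarAlgAut ℂ _ U T)
  rw [sumRootsNormSqPow_conjStarAlgAut, sumRootsNormSqPow_of_isUpperTriangular hT, ← map_pow,
    trace_conjStarAlgAut_mul_star, ← hT.isDiag_of_isStarNormal.diagonal_diag]
  simp [diagonal_pow, star_eq_conjTranspose, trace, mul_pow]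

lemma det_scalar_sub_eq_pow_mul {x : ℂ} (hx : x ≠ 0) (M : Matrix ι ι ℂ) :
    (scalar ι x - M).det = x ^ Fintype.card ι * (1 - x⁻¹ • M).det := by
  rw [← det_smul, smul_sub, smul_smul, mul_inv_cancel₀ hx, one_smul, smul_one_eq_diagonal]
  rfl

def DetFactorizes {R : Type*} [CommRing R] (A B : Matrix ι ι R) : Prop :=
  ∀ s t : R, (1 - s • A - t • B).det = (1 - s • A).det * (1 - t • B).det

theorem DetFactorizes.of_mul_eq_zero {R : Type*} [CommRing R] {A B : Matrix ι ι R}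
    (h : A * B = 0) : DetFactorizes A B := fun s t => by
  rw [← det_mul, sub_mul, mul_sub, mul_sub, smul_mul_smul_comm, h, smul_zero, sub_zero, one_mul,
    mul_one, one_mul, sub_right_comm]

namespace DetFactorizes

variable {A B : Matrix ι ι ℂ} (hAB : DetFactorizes A B)
include hAB

lemma X_pow_mul_charpoly_smul_add_smul (u v : ℂ) :
    X ^ Fintype.card ι * (u • A + v • B).charpoly =
      (u • A).charpoly * (v • B).charpoly := by
  refine eq_of_infinite_eval_eq _ _ ((Set.finite_singleton 0).infinite_compl.mono fun x hx => ?_)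
  have hx : x ≠ 0 := hx
  change eval x (X ^ _ * _) = eval x (_ * _)
  rw [eval_mul, eval_mul, eval_pow, eval_X, eval_charpoly, eval_charpoly, eval_charpoly,
    det_scalar_sub_eq_pow_mul hx, det_scalar_sub_eq_pow_mul hx, det_scalar_sub_eq_pow_mul hx,
    smul_add, smul_smul, smul_smul, ← sub_sub, hAB]
  ring

lemma roots_charpoly_smul_add_smul (u v : ℂ) :
    Fintype.card ι • {0} + (u • A + v • B).charpoly.roots =
      (u • A).charpoly.roots + (v • B).charpoly.roots := by
  have h := congrArg roots (hAB.X_pow_mul_charpoly_smul_add_smul u v)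
  rwa [roots_mul, roots_mul, roots_X_pow] at h
  · exact mul_ne_zero (charpoly_monic _).ne_zero (charpoly_monic _).ne_zero
  · exact mul_ne_zero (pow_ne_zero _ X_ne_zero) (charpoly_monic _).ne_zero

lemma sumRootsNormSqPow_smul_add_smul {k : ℕ} (hk : k ≠ 0) (u v : ℂ) :
    sumRootsNormSqPow k (u • A + v • B) =
      sumRootsNormSqPow k (u • A) + sumRootsNormSqPow k (v • B) := by
  simpa [sumRootsNormSqPow, hk, Multiset.map_nsmul, Multiset.sum_nsmul] using
    congrArg (fun s => (s.map fun z => (z * star z) ^ k).sum) (hAB.roots_charpoly_smul_add_smul u v)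

variable [IsStarNormal A] [IsStarNormal B]

lemma trace_mul_star_eq_zero : (A * star B).trace = 0 := by
  set c := (A * star B).trace
  have key : ∀ u v : ℂ, 0 ≤ u * star v * c + star (u * star v * c) := by
    intro u v
    have h := sumRootsNormSqPow_one_le_trace (u • A + v • B)
    rwa [hAB.sumRootsNormSqPow_smul_add_smul one_ne_zero, sumRootsNormSqPow_eq_trace,
      sumRootsNormSqPow_eq_trace, pow_one, pow_one, trace_smul_add_smul_mul_star,
      le_add_iff_nonneg_right] at h
  have h := key 1 (-c)
  simp only [one_mul, star_neg, star_star, neg_mul, star_mul'] at h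
  rw [mul_comm (star c), ← neg_add, neg_nonneg] at h
  have hc := le_antisymm h (add_nonneg (mul_star_self_nonneg c) (mul_star_self_nonneg c))
  exact (CStarRing.mul_star_self_eq_zero_iff c).mp (add_self_eq_zero.mp hc)

lemma isStarNormal_smul_add_smul (u v : ℂ) : IsStarNormal (u • A + v • B) := by
  refine isStarNormal_of_sumRootsNormSqPow_one_eq ?_
  rw [hAB.sumRootsNormSqPow_smul_add_smul one_ne_zero, sumRootsNormSqPow_eq_trace,
    sumRootsNormSqPow_eq_trace, pow_one, pow_one, trace_smul_add_smul_mul_star,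
    hAB.trace_mul_star_eq_zero]
  simp

lemma mul_star_comm : A * star B = star B * A :=
  mul_star_comm_of_isStarNormal_add (by simpa using hAB.isStarNormal_smul_add_smul 1 1)
    (by simpa using hAB.isStarNormal_smul_add_smul 1 I)

lemma trace_sq_add_smul_mul_star (v : ℂ) :
    ((A + v • B) ^ 2 * star ((A + v • B) ^ 2)).trace =
      (A ^ 2 * star (A ^ 2)).trace + v ^ 2 * star (v ^ 2) * (B ^ 2 * star (B ^ 2)).trace := by
  have : IsStarNormal (A + v • B) := by simpa using hAB.isStarNormal_smul_add_smul 1 v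
  have h := hAB.sumRootsNormSqPow_smul_add_smul two_ne_zero 1 v
  rwa [one_smul, sumRootsNormSqPow_eq_trace, sumRootsNormSqPow_eq_trace,
    sumRootsNormSqPow_eq_trace, _root_.smul_pow, star_smul, smul_mul_smul_comm, trace_smul,
    smul_eq_mul] at h

lemma mul_add_mul_eq_zero : A * B + B * A = 0 := by
  have hsq (v : ℂ) : (A + v • B) ^ 2 = A ^ 2 + v • (A * B + B * A) + v ^ 2 • B ^ 2 := by
    simp only [sq, add_mul, mul_add, smul_mul_assoc, mul_smul_comm]
    module
  have h := trace_mul_star_add_smul_add_smul_fourth_roots (A ^ 2) (A * B + B * A) (B ^ 2)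
  have h₁ := hAB.trace_sq_add_smul_mul_star 1
  have h₂ := hAB.trace_sq_add_smul_mul_star (-1)
  have h₃ := hAB.trace_sq_add_smul_mul_star I
  have h₄ := hAB.trace_sq_add_smul_mul_star (-I)
  rw [hsq] at h₁ h₂ h₃ h₄
  simp only [one_smul, one_pow, neg_smul, neg_sq, I_sq, star_neg, star_one, one_mul, neg_one_mul,
    neg_neg, ← sub_eq_add_neg] at h₁ h₂ h₃ h₄
  rw [h₁, h₂, h₃, h₄] at h
  have h0 : ((A * B + B * A) * star (A * B + B * A)).trace = 0 := by linear_combination h / (-4)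
  rwa [star_eq_conjTranspose, trace_mul_conjTranspose_self_eq_zero_iff] at h0

end DetFactorizes

end Matrix

theorem stmt18 (n : ℕ) (A B : Matrix (Fin n) (Fin n) ℂ)
    (hA : A * Aᴴ = Aᴴ * A) (hB : B * Bᴴ = Bᴴ * B) :
    (∀ s t : ℂ, (1 - s • A - t • B).det = (1 - s • A).det * (1 - t • B).det) ↔
    A * B = 0 := by
  have : IsStarNormal A := ⟨hA.symm⟩
  have : IsStarNormal B := ⟨hB.symm⟩
  refine ⟨fun h => ?_, DetFactorizes.of_mul_eq_zero⟩
  have hanti : A * B = -(B * A) :=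
    eq_neg_of_add_eq_zero_left (DetFactorizes.mul_add_mul_eq_zero h)
  exact mul_eq_zero_of_anticommute hanti (DetFactorizes.mul_star_comm h)
end
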